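/- Both internal and external JTB based on a fixed reason are closed under implication: in RBB, ⊢ JTB^e_r(φ→ψ) → (JTB^e_r(φ) → JTB^e_r(ψ)) and ⊢ JTB^i_r(φ→ψ) → (JTB^i_r(φ) → JTB^i_r(ψ)). -/

import Mathlib

/-- Formulas of the logic of reason-based belief: propositional letters from `P`,
negation, disjunction, `supports r φ` (i.e. `r:φ`), `adeq r` (i.e. the formula `r`,
"r is an adequate reason"), and belief `bel φ` (i.e. `Bφ`). -/
inductive Form (P R : Type) : Type
  | atom : P → Form P R
  | neg : Form P R → Form P R
  | disj : Form P R → Form P R → Form P R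
  | supports : R → Form P R → Form P R
  | adeq : R → Form P R
  | bel : Form P R → Form P R

namespace Form
variable {P R : Type}
/-- Material implication, defined classically. -/
def impl (φ ψ : Form P R) : Form P R := disj (neg φ) ψ
/-- Conjunction, defined classically. -/
def conj (φ ψ : Form P R) : Form P R := neg (disj (neg φ) (neg ψ))
/-- Biconditional. -/
def iffF (φ ψ : Form P R) : Form P R := conj (impl φ ψ) (impl ψ φ)
end Form

/-- `φ` is an instance of a classical propositional tautology: every Boolean
valuation respecting negation and disjunction makes it true. -/
def Taut {P R : Type} (φ : Form P R) : Prop :=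
  ∀ v : Form P R → Bool,
    (∀ ψ, v ψ.neg = !v ψ) →
    (∀ ψ χ, v (ψ.disj χ) = (v ψ || v χ)) →
    v φ = true

/-- Derivability in the theory RBB. -/
inductive Prov {P R : Type} : Form P R → Prop
  | taut {φ : Form P R} : Taut φ → Prov φ
  | rk (r : R) (φ ψ : Form P R) :
      Prov ((Form.supports r (φ.impl ψ)).impl ((Form.supports r φ).impl (Form.supports r ψ)))
  | a (r : R) (φ : Form P R) :
      Prov ((Form.supports r φ).impl ((Form.adeq r).impl φ))
  | rb (r : R) (φ : Form P R) :
      Prov ((Form.supports r φ).impl ((Form.bel (Form.adeq r)).impl (Form.bel φ)))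
  | d (φ : Form P R) : Prov ((Form.bel φ).impl (Form.bel φ.neg).neg)
  | mp {φ ψ : Form P R} : Prov (φ.impl ψ) → Prov φ → Prov ψ
  | rn (r : R) {φ : Form P R} : Prov φ → Prov (Form.supports r φ)
  | e {φ ψ : Form P R} : Prov (φ.iffF ψ) → Prov ((Form.bel φ).iffF (Form.bel ψ))

/-- External justified true belief based on reason r: r:φ ∧ Br ∧ r. -/
def JTBe {P R : Type} (r : R) (φ : Form P R) : Form P R :=
  (Form.supports r φ).conj ((Form.bel (Form.adeq r)).conj (Form.adeq r))

/-- Internal justified true belief based on reason r: r:φ ∧ Br ∧ φ. -/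
def JTBi {P R : Type} (r : R) (φ : Form P R) : Form P R :=
  (Form.supports r φ).conj ((Form.bel (Form.adeq r)).conj φ)

/- Both closure properties are propositional consequences of the single axiom (RK): a JTB is a
conjunction whose first conjunct `r:φ` is closed under implication by (RK), and whose remaining
conjuncts are either independent of `φ` (`Br`, `r`) or closed under implication by modus ponens. -/

lemma valuation_impl {P R : Type} {v : Form P R → Bool} (hneg : ∀ ψ, v ψ.neg = !v ψ)
    (hdisj : ∀ ψ χ, v (ψ.disj χ) = (v ψ || v χ)) (φ ψ : Form P R) :
    v (φ.impl ψ) = (!v φ || v ψ) := by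
  simp [Form.impl, hneg, hdisj]

lemma valuation_conj {P R : Type} {v : Form P R → Bool} (hneg : ∀ ψ, v ψ.neg = !v ψ)
    (hdisj : ∀ ψ χ, v (ψ.disj χ) = (v ψ || v χ)) (φ ψ : Form P R) :
    v (φ.conj ψ) = (v φ && v ψ) := by
  simp [Form.conj, hneg, hdisj]

lemma taut_imp_imp_self {P R : Type} (φ : Form P R) : Taut (φ.impl (φ.impl φ)) := by
  intro v hneg hdisj
  simp only [valuation_impl hneg hdisj]
  cases v φ <;> rfl

lemma taut_modus_ponens {P R : Type} (φ ψ : Form P R) : Taut ((φ.impl ψ).impl (φ.impl ψ)) := by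
  intro v hneg hdisj
  simp only [valuation_impl hneg hdisj]
  cases v φ <;> cases v ψ <;> rfl

lemma taut_conj_imp_imp {P R : Type} (a b c a' b' c' : Form P R) :
    Taut ((a.impl (b.impl c)).impl ((a'.impl (b'.impl c')).impl
      ((a.conj a').impl ((b.conj b').impl (c.conj c'))))) := by
  intro v hneg hdisj
  simp only [valuation_impl hneg hdisj, valuation_conj hneg hdisj]
  cases v a <;> cases v b <;> cases v c <;> cases v a' <;> cases v b' <;> cases v c' <;> rfl

namespace Prov

variable {P R : Type}

theorem mp₂ {φ ψ χ : Form P R} (h : Prov (φ.impl (ψ.impl χ))) (hφ : Prov φ) (hψ : Prov ψ) :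
    Prov χ :=
  mp (mp h hφ) hψ

theorem conj_imp_imp {a b c a' b' c' : Form P R} (h : Prov (a.impl (b.impl c)))
    (h' : Prov (a'.impl (b'.impl c'))) :
    Prov ((a.conj a').impl ((b.conj b').impl (c.conj c'))) :=
  mp₂ (taut (taut_conj_imp_imp a b c a' b' c')) h h'

end Prov

/-- both external and internal JTB based on a fixed reason are
closed under implication in RBB. -/
theorem rbb_jtb_closed_under_implication {P R : Type} (r : R) (φ ψ : Form P R) :
    Prov ((JTBe r (φ.impl ψ)).impl ((JTBe r φ).impl (JTBe r ψ))) ∧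
    Prov ((JTBi r (φ.impl ψ)).impl ((JTBi r φ).impl (JTBi r ψ))) := by
  constructor
  · exact (Prov.rk r φ ψ).conj_imp_imp
      ((Prov.taut (taut_imp_imp_self _)).conj_imp_imp (Prov.taut (taut_imp_imp_self _)))
  · exact (Prov.rk r φ ψ).conj_imp_imp
      ((Prov.taut (taut_imp_imp_self _)).conj_imp_imp (Prov.taut (taut_modus_ponens φ ψ)))
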